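/- Let X be a complete median space of finite rank and let C₁, C₂ be nonempty closed convex subsets of X such that no halfspace of X is transverse to both C₁ and C₂. Let c₁ be the unique point of π_{C₁}(C₂) and c₂ the unique point of π_{C₂}(C₁). Then the map f : Conv(C₁ ∪ C₂) → C₁ × C₂ × [c₁,c₂], f(x) = (π_{C₁}(x), π_{C₂}(x), π_{[c₁,c₂]}(x)), is an isometric embedding, where the target carries the ℓ¹-product metric d((a,b,c),(a',b',c')) = d(a,a') + d(b,b') + d(c,c'). -/

import Mathlib

/-- The interval `[a,b]` in a metric space: points `x` with `d(a,x) + d(x,b) = d(a,b)`. -/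
def mInterval {X : Type*} [MetricSpace X] (a b : X) : Set X :=
  {x : X | dist a x + dist x b = dist a b}

/-- A median space: every triple of points has a unique median point. -/
def IsMedianSpace (X : Type*) [MetricSpace X] : Prop :=
  ∀ a b c : X, ∃! m : X,
    m ∈ mInterval a b ∩ mInterval b c ∩ mInterval a c

/-- A subset is (median) convex if it contains the interval between any two of its points. -/
def MConvex {X : Type*} [MetricSpace X] (C : Set X) : Prop :=
  ∀ a ∈ C, ∀ b ∈ C, mInterval a b ⊆ C

/-- A halfspace: a convex subset with convex complement. -/
def IsHalfspace {X : Type*} [MetricSpace X] (h : Set X) : Prop :=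
  MConvex h ∧ MConvex hᶜ

/-- Two subsets are transverse if the four pairwise intersections of them and
their complements are all nonempty. -/
def TransverseSets {X : Type*} (h₁ h₂ : Set X) : Prop :=
  (h₁ ∩ h₂).Nonempty ∧ (h₁ᶜ ∩ h₂).Nonempty ∧ (h₁ ∩ h₂ᶜ).Nonempty ∧ (h₁ᶜ ∩ h₂ᶜ).Nonempty

/-- `X` has rank `n`: there are `n` pairwise transverse halfspaces but not `n+1`. -/
def HasMedianRank (X : Type*) [MetricSpace X] (n : ℕ) : Prop :=
  (∃ h : Fin n → Set X, (∀ i, IsHalfspace (h i)) ∧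
    ∀ i j, i ≠ j → TransverseSets (h i) (h j)) ∧
  ¬ ∃ h : Fin (n + 1) → Set X, (∀ i, IsHalfspace (h i)) ∧
    ∀ i j, i ≠ j → TransverseSets (h i) (h j)

/-- Median convex hull: intersection of all convex subsets containing `A`. -/
def mConvexHull {X : Type*} [MetricSpace X] (A : Set X) : Set X :=
  ⋂₀ {C : Set X | MConvex C ∧ A ⊆ C}

/-- The hyperplane bounding a halfspace `h`. -/
def mHyperplane {X : Type*} [MetricSpace X] (h : Set X) : Set X :=
  closure h ∩ closure hᶜ

/-- Depth of the halfspace `h` in the subset `A`: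
`sup { d(x, ĥ) | x ∈ h ∩ A }`. -/
noncomputable def mDepth {X : Type*} [MetricSpace X] (A h : Set X) : ℝ :=
  sSup ((fun x => Metric.infDist x (mHyperplane h)) '' (h ∩ A))

/-- `π` is the nearest-point projection onto `C`. -/
def IsNearestPointProj {X : Type*} [MetricSpace X] (C : Set X) (π : X → X) : Prop :=
  ∀ x : X, π x ∈ C ∧ dist x (π x) = Metric.infDist x C

/-- The halfspace `h` separates the points `x` and `y`. -/
def SeparatesPts {X : Type*} (h : Set X) (x y : X) : Prop :=
  (x ∈ h ∧ y ∈ hᶜ) ∨ (y ∈ h ∧ x ∈ hᶜ)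

/-!
Nearest-point projections onto convex subsets of a median space are gates, hence 1-Lipschitz
median morphisms. Splitting `d(x, y)` along the gate `π` onto `C` gives
`d(x, y) = d(x, μ) + d(π x, π y) + d(ν, y)` with `μ = m(x, π x, y)` and `ν = m(x, π y, y)`; a
projection that is constant on `C` sends `μ` and `ν` to the same point between the images of `x`
and `y`. Peeling off `π₁`, then `π₂` (constant on `C₁`), then `π₀` (constant on `C₁` and on `C₂`)
therefore shows that the ℓ¹-sum `F` of the three projection distances satisfies `F ≤ d`. Since
gates preserve betweenness, `F` is additive along intervals, and it equals `d` on `C₁ ∪ C₂`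
because `d(a, b) = d(a, c₁) + d(c₁, c₂) + d(c₂, b)` for `a ∈ C₁`, `b ∈ C₂`. An additive minorant
of `d` that is tight on a set stays tight on the intervals spanned by that set, hence, by
iteration, on its convex hull.
-/

section Intervals

variable {X : Type*} [MetricSpace X] {a b c x : X}

theorem mem_mInterval : x ∈ mInterval a b ↔ dist a x + dist x b = dist a b := Iff.rfl

theorem mem_mInterval_comm (h : x ∈ mInterval a b) : x ∈ mInterval b a := by
  rw [mem_mInterval] at h ⊢
  rw [dist_comm b x, dist_comm x a, dist_comm b a]
  linarith

theorem mInterval_comm (a b : X) : mInterval a b = mInterval b a :=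
  Set.ext fun _ => ⟨mem_mInterval_comm, mem_mInterval_comm⟩

theorem left_mem_mInterval (a b : X) : a ∈ mInterval a b := by
  simp [mem_mInterval]

theorem right_mem_mInterval (a b : X) : b ∈ mInterval a b := by
  simp [mem_mInterval]

theorem mInterval_subset_mInterval_left (h : c ∈ mInterval a b) :
    mInterval c b ⊆ mInterval a b := by
  intro y hy
  rw [mem_mInterval] at h hy ⊢
  linarith [dist_triangle a c y, dist_triangle a y b]

theorem mInterval_subset_mInterval_right (h : c ∈ mInterval a b) :
    mInterval a c ⊆ mInterval a b := by
  rw [mInterval_comm a b, mInterval_comm a c]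
  exact mInterval_subset_mInterval_left (mem_mInterval_comm h)

end Intervals

namespace IsMedianSpace

variable {X : Type*} [MetricSpace X] (hmed : IsMedianSpace X) {a b u z : X}

noncomputable def median (a b c : X) : X := (hmed a b c).exists.choose

theorem median_mem_left (a b c : X) : hmed.median a b c ∈ mInterval a b :=
  (hmed a b c).exists.choose_spec.1.1

theorem median_mem_right (a b c : X) : hmed.median a b c ∈ mInterval b c :=
  (hmed a b c).exists.choose_spec.1.2

theorem median_mem_outer (a b c : X) : hmed.median a b c ∈ mInterval a c :=
  (hmed a b c).exists.choose_spec.2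

theorem eq_median {a b c m : X} (hab : m ∈ mInterval a b) (hbc : m ∈ mInterval b c)
    (hac : m ∈ mInterval a c) : m = hmed.median a b c :=
  (hmed a b c).unique ⟨⟨hab, hbc⟩, hac⟩ (hmed a b c).exists.choose_spec

/-- `median a z b` is the gate of `z` in the interval `[a, b]`. It is identified as the median
`g` of `m(a, z, u)`, `z`, `m(b, z, u)`, which lies between `z` and `u`. -/
theorem median_mem_mInterval (hu : u ∈ mInterval a b) :
    hmed.median a z b ∈ mInterval z u := by
  set m₁ := hmed.median a z u
  set m₂ := hmed.median b z u
  set g := hmed.median m₁ z m₂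
  have hgz : g ∈ mInterval a z :=
    mInterval_subset_mInterval_left (hmed.median_mem_left a z u) (hmed.median_mem_left m₁ z m₂)
  have hzg : g ∈ mInterval z b :=
    mInterval_subset_mInterval_right (mem_mInterval_comm (hmed.median_mem_left b z u))
      (hmed.median_mem_right m₁ z m₂)
  have hg : g ∈ mInterval a b := by
    have h₁ : dist a m₁ + dist m₁ u = dist a u := hmed.median_mem_outer a z u
    have h₂ : dist b m₂ + dist m₂ u = dist b u := hmed.median_mem_outer b z u
    have h₃ : dist m₁ g + dist g m₂ = dist m₁ m₂ := hmed.median_mem_outer m₁ z m₂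
    rw [mem_mInterval] at hu ⊢
    linarith [dist_triangle a m₁ g, dist_triangle g m₂ b, dist_triangle m₁ u m₂,
      dist_triangle a g b, dist_comm u m₂, dist_comm b u, dist_comm m₂ b]
  rw [← hmed.eq_median hgz hzg hg]
  exact mInterval_subset_mInterval_right (hmed.median_mem_right a z u)
    (mem_mInterval_comm (hmed.median_mem_left m₁ z m₂))

include hmed in
theorem mConvex_mInterval (a b : X) : MConvex (mInterval a b) := by
  intro x hx y hy z hz
  set w := hmed.median a z b
  have hx' : dist z w + dist w x = dist z x := hmed.median_mem_mInterval hx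
  have hy' : dist z w + dist w y = dist z y := hmed.median_mem_mInterval hy
  have hzw : dist z w = 0 := by
    rw [mem_mInterval] at hz
    linarith [dist_triangle x w y, dist_comm z x, dist_comm w x, dist_nonneg (x := z) (y := w)]
  rw [dist_eq_zero.mp hzw]
  exact hmed.median_mem_outer a z b

end IsMedianSpace

namespace IsNearestPointProj

variable {X : Type*} [MetricSpace X] {C : Set X} {π : X → X}

theorem apply_of_mem (hπ : IsNearestPointProj C π) {x : X} (hx : x ∈ C) : π x = x := by
  have h : dist x (π x) = 0 := by rw [(hπ x).2, Metric.infDist_zero_of_mem hx]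
  exact (dist_eq_zero.mp h).symm

theorem mem_of_image_eq_singleton (hπ : IsNearestPointProj C π) {D : Set X} {c : X}
    (h : π '' D = {c}) : c ∈ C := by
  obtain ⟨d, -, rfl⟩ : c ∈ π '' D := h ▸ rfl
  exact (hπ d).1

section Gate

variable (hmed : IsMedianSpace X) (hC : MConvex C) (hπ : IsNearestPointProj C π)
include hmed hC hπ

theorem apply_mem_mInterval (x : X) {u : X} (hu : u ∈ C) : π x ∈ mInterval x u := by
  set m := hmed.median x (π x) u
  have hmC : m ∈ C := hC _ (hπ x).1 u hu (hmed.median_mem_right x (π x) u)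
  have hclose : dist x (π x) ≤ dist x m := (hπ x).2 ▸ Metric.infDist_le_dist_of_mem hmC
  have hm : dist x m + dist m (π x) = dist x (π x) := hmed.median_mem_left x (π x) u
  have hm_eq : m = π x := dist_eq_zero.mp (by linarith [dist_nonneg (x := m) (y := π x)])
  rw [← hm_eq]
  exact hmed.median_mem_outer x (π x) u

theorem apply_eq_of_mem_mInterval {x μ : X} (h : μ ∈ mInterval x (π x)) : π μ = π x := by
  have hx : dist x (π x) + dist (π x) (π μ) = dist x (π μ) :=
    hπ.apply_mem_mInterval hmed hC x (hπ μ).1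
  have hμ : dist μ (π μ) + dist (π μ) (π x) = dist μ (π x) :=
    hπ.apply_mem_mInterval hmed hC μ (hπ x).1
  rw [mem_mInterval] at h
  have h0 : dist (π μ) (π x) = 0 := by
    linarith [dist_triangle x μ (π μ), dist_comm (π x) (π μ), dist_nonneg (x := π μ) (y := π x)]
  exact dist_eq_zero.mp h0

/-- The median `t` of the three projections is compared with `π s` through the gate
`s₀ = m(α, π s, β)` of `π s` in `[α, β]`, which has the same projection as `s`. -/
theorem map_mem_mInterval {α β s : X} (hs : s ∈ mInterval α β) :
    π s ∈ mInterval (π α) (π β) := by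
  set t := hmed.median (π α) (π s) (π β)
  have htC : t ∈ C := hC _ (hπ α).1 _ (hπ β).1 (hmed.median_mem_outer _ _ _)
  have htα : dist α t + dist t (π s) = dist α (π s) :=
    mInterval_subset_mInterval_left (hπ.apply_mem_mInterval hmed hC α (hπ s).1)
      (hmed.median_mem_left _ _ _)
  have htβ : t ∈ mInterval β (π s) :=
    mInterval_subset_mInterval_left (hπ.apply_mem_mInterval hmed hC β (hπ s).1)
      (mem_mInterval_comm (hmed.median_mem_right _ _ _))
  set s₀ := hmed.median α (π s) β
  have hs₀ : π s₀ = π s := hπ.apply_eq_of_mem_mInterval hmed hC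
    (mem_mInterval_comm (hmed.median_mem_mInterval hs))
  have hs₀' : s₀ = hmed.median β α (π s) := hmed.eq_median
    (mem_mInterval_comm (hmed.median_mem_outer _ _ _)) (hmed.median_mem_left _ _ _)
    (mem_mInterval_comm (hmed.median_mem_right _ _ _))
  have h₁ : dist α s₀ + dist s₀ t = dist α t := hs₀' ▸ hmed.median_mem_mInterval htβ
  have h₂ : dist s₀ (π s) + dist (π s) t = dist s₀ t :=
    hs₀ ▸ hπ.apply_mem_mInterval hmed hC s₀ htC
  have h₃ : dist α s₀ + dist s₀ (π s) = dist α (π s) := hmed.median_mem_left _ _ _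
  have ht : dist (π s) t = 0 := by
    linarith [dist_comm (π s) t, dist_nonneg (x := π s) (y := t)]
  rw [dist_eq_zero.mp ht]
  exact hmed.median_mem_outer _ _ _

theorem map_median (u v w : X) :
    π (hmed.median u v w) = hmed.median (π u) (π v) (π w) :=
  hmed.eq_median (hπ.map_mem_mInterval hmed hC (hmed.median_mem_left u v w))
    (hπ.map_mem_mInterval hmed hC (hmed.median_mem_right u v w))
    (hπ.map_mem_mInterval hmed hC (hmed.median_mem_outer u v w))

theorem dist_eq_dist_median_add (x y : X) :
    dist x y = dist x (hmed.median x (π x) y) + dist (π x) (π y)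
      + dist (hmed.median x (π y) y) y := by
  set μ := hmed.median x (π x) y
  set ν := hmed.median x (π y) y
  have hx : dist x (π x) + dist (π x) (π y) = dist x (π y) :=
    hπ.apply_mem_mInterval hmed hC x (hπ y).1
  have hy : dist y (π y) + dist (π y) (π x) = dist y (π x) :=
    hπ.apply_mem_mInterval hmed hC y (hπ x).1
  have hμx : dist (π x) μ + dist μ x = dist (π x) x :=
    hmed.median_mem_mInterval (left_mem_mInterval x y)
  have hμy : dist (π x) μ + dist μ y = dist (π x) y :=
    hmed.median_mem_mInterval (right_mem_mInterval x y)
  have hνx : dist (π y) ν + dist ν x = dist (π y) x :=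
    hmed.median_mem_mInterval (left_mem_mInterval x y)
  have hνy : dist (π y) ν + dist ν y = dist (π y) y :=
    hmed.median_mem_mInterval (right_mem_mInterval x y)
  have hμ : dist x μ + dist μ y = dist x y := hmed.median_mem_outer _ _ _
  have hν : dist x ν + dist ν y = dist x y := hmed.median_mem_outer _ _ _
  linarith [dist_comm x (π x), dist_comm y (π y), dist_comm x (π y), dist_comm y (π x),
    dist_comm (π x) (π y), dist_comm x μ, dist_comm x ν]

theorem dist_add_le {F : X → X → ℝ} (hF : ∀ x y, F x y ≤ dist x y)
    (hsplit : ∀ x y, ∀ c ∈ C, ∀ c' ∈ C,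
      F x (hmed.median x c y) + F (hmed.median x c' y) y = F x y) (x y : X) :
    dist (π x) (π y) + F x y ≤ dist x y := by
  rw [hπ.dist_eq_dist_median_add hmed hC x y, ← hsplit x y _ (hπ x).1 _ (hπ y).1]
  linarith [hF x (hmed.median x (π x) y), hF (hmed.median x (π y) y) y]

theorem dist_le (x y : X) : dist (π x) (π y) ≤ dist x y := by
  simpa using hπ.dist_add_le hmed hC (F := fun _ _ => 0) (fun _ _ => dist_nonneg) (by simp) x y

theorem dist_median_add_dist_median {c c' : X} (h : π c = π c') (x y : X) :
    dist (π x) (π (hmed.median x c y)) + dist (π (hmed.median x c' y)) (π y) =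
      dist (π x) (π y) := by
  rw [hπ.map_median hmed hC, hπ.map_median hmed hC, h]
  exact hmed.median_mem_outer _ _ _

end Gate

theorem apply_eq_of_left_mem_mInterval (hmed : IsMedianSpace X) {p q x : X}
    (hπ : IsNearestPointProj (mInterval p q) π) (h : p ∈ mInterval x q) : π x = p := by
  have hp : dist x (π x) + dist (π x) p = dist x p :=
    hπ.apply_mem_mInterval hmed (hmed.mConvex_mInterval p q) x (left_mem_mInterval p q)
  have hq : dist x (π x) + dist (π x) q = dist x q :=
    hπ.apply_mem_mInterval hmed (hmed.mConvex_mInterval p q) x (right_mem_mInterval p q)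
  have hpq : dist p (π x) + dist (π x) q = dist p q := (hπ x).1
  rw [mem_mInterval] at h
  have h0 : dist (π x) p = 0 := by
    linarith [dist_comm p (π x), dist_nonneg (x := π x) (y := p)]
  exact dist_eq_zero.mp h0

theorem apply_eq_of_image_eq_singleton (hmed : IsMedianSpace X) (hC : MConvex C)
    (hπ : IsNearestPointProj C π) {D : Set X} {c d : X} (hc : π '' D = {c}) (hd : d ∈ D)
    {π₀ : X → X} (hπ₀ : IsNearestPointProj (mInterval c d) π₀) {a : X} (ha : a ∈ C) :
    π₀ a = c := by
  refine hπ₀.apply_eq_of_left_mem_mInterval hmed (mem_mInterval_comm ?_)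
  rw [← hc.subset (Set.mem_image_of_mem π hd)]
  exact hπ.apply_mem_mInterval hmed hC d ha

end IsNearestPointProj

section AdditiveMinorant

variable {X : Type*} [MetricSpace X]

structure IsAdditiveMinorant (F : X → X → ℝ) : Prop where
  le_dist : ∀ x y, F x y ≤ dist x y
  symm : ∀ x y, F x y = F y x
  add_of_mem : ∀ {x y z}, z ∈ mInterval x y → F x z + F z y = F x y

def intervalJoin (A : Set X) : Set X := ⋃ u ∈ A, ⋃ v ∈ A, mInterval u v

theorem subset_intervalJoin (A : Set X) : A ⊆ intervalJoin A := fun a ha =>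
  Set.mem_biUnion ha (Set.mem_biUnion ha (left_mem_mInterval a a))

theorem monotone_iterate_intervalJoin (B : Set X) : Monotone fun n => intervalJoin^[n] B :=
  monotone_nat_of_le_succ fun n => by
    simpa only [Function.iterate_succ_apply'] using subset_intervalJoin _

theorem mConvexHull_subset_iUnion_iterate (B : Set X) :
    mConvexHull B ⊆ ⋃ n, intervalJoin^[n] B := by
  have hmono := monotone_iterate_intervalJoin B
  refine Set.sInter_subset_of_mem ⟨?_, Set.subset_iUnion (fun n => intervalJoin^[n] B) 0⟩
  intro a ha b hb z hz
  obtain ⟨m, ha⟩ := Set.mem_iUnion.mp ha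
  obtain ⟨n, hb⟩ := Set.mem_iUnion.mp hb
  refine Set.mem_iUnion.mpr ⟨max m n + 1, ?_⟩
  rw [Function.iterate_succ_apply']
  exact Set.mem_biUnion (hmono (le_max_left m n) ha)
    (Set.mem_biUnion (hmono (le_max_right m n) hb) hz)

namespace IsAdditiveMinorant

variable {F : X → X → ℝ} (hF : IsAdditiveMinorant F) {α β γ : X}
include hF

theorem eq_dist_left (hαβ : F α β = dist α β) (hγ : γ ∈ mInterval α β) :
    F α γ = dist α γ := by
  have := hF.add_of_mem hγ
  rw [mem_mInterval] at hγ
  linarith [hF.le_dist α γ, hF.le_dist γ β]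

theorem eq_dist_right (hαβ : F α β = dist α β) (hγ : γ ∈ mInterval α β) :
    F γ β = dist γ β := by
  have := hF.add_of_mem hγ
  rw [mem_mInterval] at hγ
  linarith [hF.le_dist α γ, hF.le_dist γ β]

theorem eq_dist_of_mem_mInterval (hmed : IsMedianSpace X) (hαβ : F α β = dist α β)
    {γ' : X} (hγ : γ ∈ mInterval α β) (hγ' : γ' ∈ mInterval α β) : F γ γ' = dist γ γ' := by
  set ν := hmed.median γ α γ'
  have hγν : F γ ν = dist γ ν := by
    refine hF.eq_dist_left ?_ (hmed.median_mem_left γ α γ')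
    rw [hF.symm, dist_comm]
    exact hF.eq_dist_left hαβ hγ
  have hνγ' : F ν γ' = dist ν γ' :=
    hF.eq_dist_right (hF.eq_dist_left hαβ hγ') (hmed.median_mem_right γ α γ')
  have hν := hmed.median_mem_outer γ α γ'
  rw [← hF.add_of_mem hν, hγν, hνγ']
  exact hν

/-- The gate `μ` of `w` in `[α, β]` lies between `w` and `ζ`, so the equality splits into
`F w μ = dist w μ` and `F μ ζ = dist μ ζ`. -/
theorem eq_dist_of_eq_dist_endpoints (hmed : IsMedianSpace X) {w ζ : X}
    (hwα : F w α = dist w α) (hαβ : F α β = dist α β) (hζ : ζ ∈ mInterval α β) :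
    F w ζ = dist w ζ := by
  set μ := hmed.median α w β
  have hwμ : F w μ = dist w μ :=
    hF.eq_dist_left hwα (mem_mInterval_comm (hmed.median_mem_left α w β))
  have hμζ : F μ ζ = dist μ ζ :=
    hF.eq_dist_of_mem_mInterval hmed hαβ (hmed.median_mem_outer α w β) hζ
  have hμ : μ ∈ mInterval w ζ := hmed.median_mem_mInterval hζ
  rw [← hF.add_of_mem hμ, hwμ, hμζ]
  exact hμ

theorem eq_dist_on_intervalJoin (hmed : IsMedianSpace X) {A : Set X}
    (hA : ∀ u ∈ A, ∀ v ∈ A, F u v = dist u v) :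
    ∀ x ∈ intervalJoin A, ∀ y ∈ intervalJoin A, F x y = dist x y := by
  have hleft : ∀ w ∈ A, ∀ y ∈ intervalJoin A, F w y = dist w y := by
    intro w hw y hy
    simp only [intervalJoin, Set.mem_iUnion] at hy
    obtain ⟨u, hu, v, hv, hy⟩ := hy
    exact hF.eq_dist_of_eq_dist_endpoints hmed (hA w hw u hu) (hA u hu v hv) hy
  intro x hx y hy
  simp only [intervalJoin, Set.mem_iUnion] at hx
  obtain ⟨u, hu, v, hv, hx⟩ := hx
  rw [hF.symm, dist_comm]
  refine hF.eq_dist_of_eq_dist_endpoints hmed ?_ (hA u hu v hv) hx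
  rw [hF.symm, dist_comm]
  exact hleft u hu y hy

theorem eq_dist_on_mConvexHull (hmed : IsMedianSpace X) {B : Set X}
    (hB : ∀ u ∈ B, ∀ v ∈ B, F u v = dist u v) :
    ∀ x ∈ mConvexHull B, ∀ y ∈ mConvexHull B, F x y = dist x y := by
  have hiter : ∀ n, ∀ x ∈ intervalJoin^[n] B, ∀ y ∈ intervalJoin^[n] B, F x y = dist x y := by
    intro n
    induction n with
    | zero => exact hB
    | succ n ih =>
      simpa only [Function.iterate_succ_apply'] using hF.eq_dist_on_intervalJoin hmed ih
  intro x hx y hy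
  obtain ⟨m, hx⟩ := Set.mem_iUnion.mp (mConvexHull_subset_iUnion_iterate B hx)
  obtain ⟨n, hy⟩ := Set.mem_iUnion.mp (mConvexHull_subset_iUnion_iterate B hy)
  have hmono := monotone_iterate_intervalJoin B
  exact hiter (max m n) x (hmono (le_max_left m n) hx) y (hmono (le_max_right m n) hy)

end IsAdditiveMinorant

end AdditiveMinorant

section ProjectionSum

variable {X : Type*} [MetricSpace X] {C₀ C₁ C₂ : Set X} {π₀ π₁ π₂ : X → X} {c₁ c₂ : X}

theorem dist_add_dist_add_dist_le (hmed : IsMedianSpace X) (h₀cv : MConvex C₀)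
    (h₁cv : MConvex C₁) (h₂cv : MConvex C₂) (hπ₀ : IsNearestPointProj C₀ π₀)
    (hπ₁ : IsNearestPointProj C₁ π₁) (hπ₂ : IsNearestPointProj C₂ π₂)
    (hπ₂C₁ : ∀ a ∈ C₁, π₂ a = c₂) (hπ₀C₁ : ∀ a ∈ C₁, π₀ a = c₁) (hπ₀C₂ : ∀ b ∈ C₂, π₀ b = c₂)
    (x y : X) : dist (π₁ x) (π₁ y) + dist (π₂ x) (π₂ y) + dist (π₀ x) (π₀ y) ≤ dist x y := by
  have h₂₀ : ∀ x y, dist (π₂ x) (π₂ y) + dist (π₀ x) (π₀ y) ≤ dist x y :=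
    hπ₂.dist_add_le hmed h₂cv (hπ₀.dist_le hmed h₀cv) fun x y c hc c' hc' =>
      hπ₀.dist_median_add_dist_median hmed h₀cv
        (show π₀ c = π₀ c' by rw [hπ₀C₂ c hc, hπ₀C₂ c' hc']) x y
  have h₁₂₀ := hπ₁.dist_add_le hmed h₁cv h₂₀ fun x y c hc c' hc' => by
    have h₂ := hπ₂.dist_median_add_dist_median hmed h₂cv
      (show π₂ c = π₂ c' by rw [hπ₂C₁ c hc, hπ₂C₁ c' hc']) x y
    have h₀ := hπ₀.dist_median_add_dist_median hmed h₀cv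
      (show π₀ c = π₀ c' by rw [hπ₀C₁ c hc, hπ₀C₁ c' hc']) x y
    linarith
  linarith [h₁₂₀ x y]

theorem isAdditiveMinorant_dist_add_dist_add_dist (hmed : IsMedianSpace X)
    (h₀cv : MConvex C₀) (h₁cv : MConvex C₁) (h₂cv : MConvex C₂)
    (hπ₀ : IsNearestPointProj C₀ π₀) (hπ₁ : IsNearestPointProj C₁ π₁)
    (hπ₂ : IsNearestPointProj C₂ π₂)
    (hπ₂C₁ : ∀ a ∈ C₁, π₂ a = c₂) (hπ₀C₁ : ∀ a ∈ C₁, π₀ a = c₁) (hπ₀C₂ : ∀ b ∈ C₂, π₀ b = c₂) :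
    IsAdditiveMinorant fun x y => dist (π₁ x) (π₁ y) + dist (π₂ x) (π₂ y) + dist (π₀ x) (π₀ y)
    where
  le_dist := dist_add_dist_add_dist_le hmed h₀cv h₁cv h₂cv hπ₀ hπ₁ hπ₂ hπ₂C₁ hπ₀C₁ hπ₀C₂
  symm x y := by simp only [dist_comm]
  add_of_mem hz := by
    have h₀ : _ = _ := hπ₀.map_mem_mInterval hmed h₀cv hz
    have h₁ : _ = _ := hπ₁.map_mem_mInterval hmed h₁cv hz
    have h₂ : _ = _ := hπ₂.map_mem_mInterval hmed h₂cv hz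
    linarith

theorem dist_eq_dist_add_dist_add_dist (hmed : IsMedianSpace X) (h₁cv : MConvex C₁)
    (h₂cv : MConvex C₂) (hπ₁ : IsNearestPointProj C₁ π₁) (hπ₂ : IsNearestPointProj C₂ π₂)
    (hc₁ : π₁ '' C₂ = {c₁}) (hc₂ : π₂ '' C₁ = {c₂}) {a b : X} (ha : a ∈ C₁) (hb : b ∈ C₂) :
    dist a b = dist a c₁ + dist c₁ c₂ + dist c₂ b := by
  have hc₂C₂ := hπ₂.mem_of_image_eq_singleton hc₂
  have hab : dist a c₂ + dist c₂ b = dist a b :=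
    hc₂.subset (Set.mem_image_of_mem π₂ ha) ▸ hπ₂.apply_mem_mInterval hmed h₂cv a hb
  have hc₂a : dist c₂ c₁ + dist c₁ a = dist c₂ a :=
    hc₁.subset (Set.mem_image_of_mem π₁ hc₂C₂) ▸ hπ₁.apply_mem_mInterval hmed h₁cv c₂ ha
  linarith [dist_comm c₂ c₁, dist_comm c₁ a, dist_comm c₂ a]

end ProjectionSum

theorem statement7_general (X : Type*) [MetricSpace X] (hmed : IsMedianSpace X) (C₁ C₂ : Set X)
    (h₁cv : MConvex C₁) (h₂cv : MConvex C₂)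
    (π₁ π₂ : X → X) (hπ₁ : IsNearestPointProj C₁ π₁) (hπ₂ : IsNearestPointProj C₂ π₂)
    (c₁ c₂ : X) (hc₁ : π₁ '' C₂ = {c₁}) (hc₂ : π₂ '' C₁ = {c₂})
    (π₀ : X → X) (hπ₀ : IsNearestPointProj (mInterval c₁ c₂) π₀) :
    ∀ x ∈ mConvexHull (C₁ ∪ C₂), ∀ y ∈ mConvexHull (C₁ ∪ C₂),
      dist x y = dist (π₁ x) (π₁ y) + dist (π₂ x) (π₂ y) + dist (π₀ x) (π₀ y) := by
  have hπ₁C₂ : ∀ b ∈ C₂, π₁ b = c₁ := fun b hb => hc₁.subset (Set.mem_image_of_mem π₁ hb)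
  have hπ₂C₁ : ∀ a ∈ C₁, π₂ a = c₂ := fun a ha => hc₂.subset (Set.mem_image_of_mem π₂ ha)
  have hπ₀C₁ : ∀ a ∈ C₁, π₀ a = c₁ := fun a =>
    hπ₁.apply_eq_of_image_eq_singleton hmed h₁cv hc₁ (hπ₂.mem_of_image_eq_singleton hc₂) hπ₀
  have hπ₀C₂ : ∀ b ∈ C₂, π₀ b = c₂ := fun b =>
    hπ₂.apply_eq_of_image_eq_singleton hmed h₂cv hc₂ (hπ₁.mem_of_image_eq_singleton hc₁)
      (mInterval_comm c₁ c₂ ▸ hπ₀)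
  have hF := isAdditiveMinorant_dist_add_dist_add_dist hmed (hmed.mConvex_mInterval c₁ c₂)
    h₁cv h₂cv hπ₀ hπ₁ hπ₂ hπ₂C₁ hπ₀C₁ hπ₀C₂
  have hcross : ∀ a ∈ C₁, ∀ b ∈ C₂,
      dist (π₁ a) (π₁ b) + dist (π₂ a) (π₂ b) + dist (π₀ a) (π₀ b) = dist a b := by
    intro a ha b hb
    rw [hπ₁.apply_of_mem ha, hπ₁C₂ b hb, hπ₂C₁ a ha, hπ₂.apply_of_mem hb, hπ₀C₁ a ha, hπ₀C₂ b hb,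
      dist_eq_dist_add_dist_add_dist hmed h₁cv h₂cv hπ₁ hπ₂ hc₁ hc₂ ha hb]
    ring
  refine fun x hx y hy => (hF.eq_dist_on_mConvexHull hmed ?_ x hx y hy).symm
  rintro u (hu | hu) v (hv | hv)
  · simp [hπ₁.apply_of_mem hu, hπ₁.apply_of_mem hv, hπ₂C₁ u hu, hπ₂C₁ v hv, hπ₀C₁ u hu, hπ₀C₁ v hv]
  · exact hcross u hu v hv
  · exact (hF.symm u v).trans ((hcross v hv u hu).trans (dist_comm v u))
  · simp [hπ₂.apply_of_mem hu, hπ₂.apply_of_mem hv, hπ₁C₂ u hu, hπ₁C₂ v hv, hπ₀C₂ u hu, hπ₀C₂ v hv]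

/-- If no halfspace is transverse to both closed convex sets `C₁`, `C₂`, then the map
`x ↦ (π_{C₁}(x), π_{C₂}(x), π_{[c₁,c₂]}(x))` is an isometric embedding of `Conv(C₁ ∪ C₂)`
into the `ℓ¹`-product `C₁ × C₂ × [c₁,c₂]`. -/
theorem statement7 (X : Type*) [MetricSpace X] [CompleteSpace X]
    (hmed : IsMedianSpace X) (hrank : ∃ n : ℕ, HasMedianRank X n)
    (C₁ C₂ : Set X) (h₁ne : C₁.Nonempty) (h₂ne : C₂.Nonempty)
    (h₁cl : IsClosed C₁) (h₂cl : IsClosed C₂) (h₁cv : MConvex C₁) (h₂cv : MConvex C₂)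
    (hns : ¬ ∃ h : Set X, IsHalfspace h ∧
      (h ∩ C₁).Nonempty ∧ (hᶜ ∩ C₁).Nonempty ∧ (h ∩ C₂).Nonempty ∧ (hᶜ ∩ C₂).Nonempty)
    (π₁ π₂ : X → X) (hπ₁ : IsNearestPointProj C₁ π₁) (hπ₂ : IsNearestPointProj C₂ π₂)
    (c₁ c₂ : X) (hc₁ : π₁ '' C₂ = {c₁}) (hc₂ : π₂ '' C₁ = {c₂})
    (π₀ : X → X) (hπ₀ : IsNearestPointProj (mInterval c₁ c₂) π₀) :
    ∀ x ∈ mConvexHull (C₁ ∪ C₂), ∀ y ∈ mConvexHull (C₁ ∪ C₂),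
      dist x y = dist (π₁ x) (π₁ y) + dist (π₂ x) (π₂ y) + dist (π₀ x) (π₀ y) :=
  statement7_general X hmed C₁ C₂ h₁cv h₂cv π₁ π₂ hπ₁ hπ₂ c₁ c₂ hc₁ hc₂ π₀ hπ₀
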